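/- Identifier substitution: if s ∘ P makes a transition labeled (i, λ) to s' ∘ P' in the identified LTS, then for each j ∈ {1,2} there exist i' and s'' such that [∩ⱼ](s) ∘ P makes a transition labeled (i', λ) to s'' ∘ P'. -/
import Mathlib


/-- The stream of the identifier pattern `(c,s)`. -/
def stream (c s : ℕ) : Set ℕ := {x | ∃ n : ℕ, x = c + n * s}

/-- Compatibility of identifier patterns: disjointness of their streams. -/
def IPCompat (p q : ℕ × ℕ) : Prop := Disjoint (stream p.1 p.2) (stream q.1 q.2)

/-- Seeds: binary trees of identifier patterns. -/
inductive Seed where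
  | ip : ℕ → ℕ → Seed
  | pair : Seed → Seed → Seed

/-- The identifier patterns occurring in a seed. -/
def Seed.leaves : Seed → List (ℕ × ℕ)
  | .ip c s => [(c, s)]
  | .pair s₁ s₂ => s₁.leaves ++ s₂.leaves

/-- A seed is well-formed when its patterns are genuine identifier patterns
(positive step) and pairwise compatible. -/
def SeedWF (s : Seed) : Prop :=
  (∀ p ∈ s.leaves, 0 < p.2) ∧ s.leaves.Pairwise IPCompat

/-- Two seeds are compatible if all their identifier patterns are pairwise compatible. -/
def SeedCompat (s₁ s₂ : Seed) : Prop :=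
  ∀ p ∈ s₁.leaves, ∀ q ∈ s₂.leaves, IPCompat p q

/-- Labels of CCS: names, co-names, τ and υ. -/
inductive Label where
  | name : ℕ → Label
  | coname : ℕ → Label
  | tau : Label
  | ups : Label
deriving DecidableEq

/-- Complementation of labels. -/
def Label.comp : Label → Label
  | .name a => .coname a
  | .coname a => .name a
  | .tau => .tau
  | .ups => .ups

/-- Visible labels (names and co-names). -/
def Label.isVisible : Label → Prop
  | .tau => False
  | .ups => False
  | _ => True

/-- CCS processes: prefix, parallel, restriction, non-deterministic choice,
guarded sum and internal choice. -/
inductive Proc where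
  | nil : Proc
  | pre : Label → Proc → Proc
  | par : Proc → Proc → Proc
  | res : ℕ → Proc → Proc
  | ovee : Proc → Proc → Proc
  | gsum : Label → Proc → Label → Proc → Proc
  | ich : Proc → Proc → Proc
deriving DecidableEq

/-- Identifiers: atomic (from ℕ via the generator γ = id) or paired. -/
inductive Ident where
  | a : ℕ → Ident
  | p : ℕ → ℕ → Ident
deriving DecidableEq

/-- The projections of the splitter `∩(c,s) = ((c,2s),(c+s,2s))`. -/
def ipProj (j : Bool) (p : ℕ × ℕ) : ℕ × ℕ :=
  if j then (p.1, 2 * p.2) else (p.1 + p.2, 2 * p.2)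

/-- Applying the `j`-th projection of the splitter to every leaf of a seed. -/
def Seed.proj (j : Bool) : Seed → Seed
  | .ip c s => .ip (ipProj j (c, s)).1 (ipProj j (c, s)).2
  | .pair s₁ s₂ => .pair (s₁.proj j) (s₂.proj j)

/-- The splitter helper `∩?(ip, P)`. -/
def splitHelper : ℕ × ℕ → Proc → Seed
  | ip, .par P₁ P₂ =>
      .pair (splitHelper (ipProj true ip) P₁) (splitHelper (ipProj false ip) P₂)
  | ip, _ => .ip ip.1 ip.2

/-- Well-identified processes: the seed tree shape matches the parallel
structure of the process. -/
inductive WI : Seed → Proc → Prop where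
  | leaf : ∀ (c s : ℕ) (P : Proc), (∀ P₁ P₂, P ≠ .par P₁ P₂) → WI (.ip c s) P
  | par : ∀ {s₁ s₂ P₁ P₂}, WI s₁ P₁ → WI s₂ P₂ → WI (.pair s₁ s₂) (.par P₁ P₂)

/-- The identified labeled transition system (ILTS) on identified processes. -/
inductive IStep : Seed × Proc → Ident × Label → Seed × Proc → Prop where
  | act : ∀ (c s : ℕ) (l : Label) (P : Proc), l.isVisible →
      IStep (.ip c s, .pre l P) (.a c, l) (splitHelper (c + s, s) P, P)
  | res : ∀ {σ P i α σ' P'} (a : ℕ), IStep (σ, P) (i, α) (σ', P') →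
      α ≠ .name a → α ≠ .coname a →
      IStep (σ, .res a P) (i, α) (σ', .res a P')
  | syn : ∀ {σ₁ P σ₁' P' σ₂ Q σ₂' Q' : _} {i₁ i₂ : ℕ} {l : Label}, l.isVisible →
      IStep (σ₁, P) (.a i₁, l) (σ₁', P') →
      IStep (σ₂, Q) (.a i₂, l.comp) (σ₂', Q') →
      SeedCompat σ₁ σ₂ →
      IStep (.pair σ₁ σ₂, .par P Q) (.p i₁ i₂, .tau) (.pair σ₁' σ₂', .par P' Q')
  | parL : ∀ {σ₁ P σ₁' P' i α} (σ₂ : Seed) (Q : Proc),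
      IStep (σ₁, P) (i, α) (σ₁', P') → SeedCompat σ₁ σ₂ →
      IStep (.pair σ₁ σ₂, .par P Q) (i, α) (.pair σ₁' σ₂, .par P' Q)
  | parR : ∀ {σ₂ Q σ₂' Q' i α} (σ₁ : Seed) (P : Proc),
      IStep (σ₂, Q) (i, α) (σ₂', Q') → SeedCompat σ₁ σ₂ →
      IStep (.pair σ₁ σ₂, .par P Q) (i, α) (.pair σ₁ σ₂', .par P Q')
  | oveeL : ∀ {σ P σ' P' i α} (Q : Proc),
      IStep (σ, P) (i, α) (σ', P') →
      IStep (σ, .ovee P Q) (i, α) (σ', P')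
  | oveeR : ∀ {σ Q σ' Q' i α} (P : Proc),
      IStep (σ, Q) (i, α) (σ', Q') →
      IStep (σ, .ovee P Q) (i, α) (σ', Q')
  | gsumL : ∀ (c s : ℕ) (l₁ : Label) (P₁ : Proc) (l₂ : Label) (P₂ : Proc),
      IStep (.ip c s, .gsum l₁ P₁ l₂ P₂) (.a c, l₁) (splitHelper (c + s, s) P₁, P₁)
  | gsumR : ∀ (c s : ℕ) (l₁ : Label) (P₁ : Proc) (l₂ : Label) (P₂ : Proc),
      IStep (.ip c s, .gsum l₁ P₁ l₂ P₂) (.a c, l₂) (splitHelper (c + s, s) P₂, P₂)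
  | ichL : ∀ (c s : ℕ) (P Q : Proc),
      IStep (.ip c s, .ich P Q) (.a c, .ups) (splitHelper (c + s, s) P, P)
  | ichR : ∀ (c s : ℕ) (P Q : Proc),
      IStep (.ip c s, .ich P Q) (.a c, .ups) (splitHelper (c + s, s) Q, Q)

lemma stream_proj_subset (j : Bool) (p : ℕ × ℕ) :
    stream (ipProj j p).1 (ipProj j p).2 ⊆ stream p.1 p.2 := by
  cases j with
  | false =>
    intro x hx
    obtain ⟨n, rfl⟩ := hx
    exact ⟨2 * n + 1, by simp [ipProj]; ring⟩
  | true =>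
    intro x hx
    obtain ⟨n, rfl⟩ := hx
    exact ⟨2 * n, by simp [ipProj]; ring⟩

lemma IPCompat_proj {p q : ℕ × ℕ} (j j' : Bool) (h : IPCompat p q) :
    IPCompat (ipProj j p) (ipProj j' q) :=
  h.mono (stream_proj_subset j p) (stream_proj_subset j' q)

lemma leaves_proj (j : Bool) (σ : Seed) :
    (σ.proj j).leaves = σ.leaves.map (ipProj j) := by
  induction σ with
  | ip c s => rfl
  | pair s₁ s₂ ih₁ ih₂ => simp [Seed.proj, Seed.leaves, ih₁, ih₂]

lemma SeedCompat_proj {σ₁ σ₂ : Seed} (j : Bool) (h : SeedCompat σ₁ σ₂) :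
    SeedCompat (σ₁.proj j) (σ₂.proj j) := by
  intro p hp q hq
  rw [leaves_proj] at hp hq
  obtain ⟨p₀, hp₀, rfl⟩ := List.mem_map.mp hp
  obtain ⟨q₀, hq₀, rfl⟩ := List.mem_map.mp hq
  exact IPCompat_proj j j (h p₀ hp₀ q₀ hq₀)

lemma ident_substitution_aux : ∀ {sp lp sp'}, IStep sp lp sp' → ∀ j : Bool,
    ∃ (i' : Ident) (σ'' : Seed), IStep (sp.1.proj j, sp.2) (i', lp.2) (σ'', sp'.2) ∧
      ∀ k : ℕ, lp.1 = .a k → ∃ k', i' = .a k' := by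
  intro sp lp sp' h
  induction h with
  | act c s l P hl =>
      intro j
      exact ⟨_, _, IStep.act _ _ l P hl, fun k _ => ⟨_, rfl⟩⟩
  | res a h h₁ h₂ ih =>
      intro j
      obtain ⟨i', σ'', hs, hk⟩ := ih j
      exact ⟨i', σ'', IStep.res a hs h₁ h₂, hk⟩
  | syn hl h₁ h₂ hc ih₁ ih₂ =>
      intro j
      obtain ⟨i₁', σ₁'', hs₁, hk₁⟩ := ih₁ j
      obtain ⟨i₂', σ₂'', hs₂, hk₂⟩ := ih₂ j
      obtain ⟨k₁, rfl⟩ := hk₁ _ rfl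
      obtain ⟨k₂, rfl⟩ := hk₂ _ rfl
      exact ⟨_, _, IStep.syn hl hs₁ hs₂ (SeedCompat_proj j hc), fun k hk => by simp at hk⟩
  | parL σ₂ Q h hc ih =>
      intro j
      obtain ⟨i', σ'', hs, hk⟩ := ih j
      exact ⟨i', _, IStep.parL _ Q hs (SeedCompat_proj j hc), hk⟩
  | parR σ₁ P h hc ih =>
      intro j
      obtain ⟨i', σ'', hs, hk⟩ := ih j
      exact ⟨i', _, IStep.parR _ P hs (SeedCompat_proj j hc), hk⟩
  | oveeL Q h ih =>
      intro j
      obtain ⟨i', σ'', hs, hk⟩ := ih j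
      exact ⟨i', σ'', IStep.oveeL Q hs, hk⟩
  | oveeR P h ih =>
      intro j
      obtain ⟨i', σ'', hs, hk⟩ := ih j
      exact ⟨i', σ'', IStep.oveeR P hs, hk⟩
  | gsumL c s l₁ P₁ l₂ P₂ =>
      intro j
      exact ⟨_, _, IStep.gsumL _ _ l₁ P₁ l₂ P₂, fun k _ => ⟨_, rfl⟩⟩
  | gsumR c s l₁ P₁ l₂ P₂ =>
      intro j
      exact ⟨_, _, IStep.gsumR _ _ l₁ P₁ l₂ P₂, fun k _ => ⟨_, rfl⟩⟩
  | ichL c s P Q =>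
      intro j
      exact ⟨_, _, IStep.ichL _ _ P Q, fun k _ => ⟨_, rfl⟩⟩
  | ichR c s P Q =>
      intro j
      exact ⟨_, _, IStep.ichR _ _ P Q, fun k _ => ⟨_, rfl⟩⟩

/-- Identifier substitution: if `s ∘ P` makes a transition labeled `(i, α)` to
`s' ∘ P'`, then for each projection `j` of the splitter there are `i'` and `s''`
such that `[∩ⱼ](s) ∘ P` makes a transition labeled `(i', α)` to `s'' ∘ P'`. -/
theorem ident_substitution (σ σ' : Seed) (P P' : Proc) (i : Ident) (α : Label)
    (h : IStep (σ, P) (i, α) (σ', P')) :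
    ∀ j : Bool, ∃ (i' : Ident) (σ'' : Seed), IStep (σ.proj j, P) (i', α) (σ'', P') := by
  intro j
  obtain ⟨i', σ'', hs, _⟩ := ident_substitution_aux h j
  exact ⟨i', σ'', hs⟩
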